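/- arXiv:2112.01614 — 2 statements merged into one kernel-verified Lean document; each statement's English description precedes it below -/
import Mathlib

section
/- Let n ≥ 1, A_n the n×n upper shift matrix, b_n the last standard basis vector, k_j(ω) = binom(n, j−1)·ω^{n+1−j}, and K(ω) = A_n − b_n·k(ω). Then for every ω ∈ ℝ the spectrum of K(ω) (over ℂ) is exactly the singleton {−ω}; in particular every closed-loop eigenvalue of the bandwidth-parametrized controller matrix equals −ω, so for ω > 0 the matrix is Hurwitz. -/
/-!
`K(ω)` is the companion matrix of the gains, so its characteristic polynomial is
`Xⁿ + k_n Xⁿ⁻¹ + ⋯ + k_1`: expanding `det (t - K)` along the first column, which has only two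
nonzero entries, reduces it to the companion matrix of size `n - 1` and a triangular minor.
With `k_j = binom(n, j-1) ω^(n+1-j)` this polynomial is `(X + ω)ⁿ`, whose only root is `-ω`.
-/

open Matrix

/-- The `n × n` upper shift matrix: ones on the superdiagonal, zeros elsewhere. -/
noncomputable def shiftMat (n : ℕ) : Matrix (Fin n) (Fin n) ℝ :=
  Matrix.of fun i j => if (i : ℕ) + 1 = (j : ℕ) then 1 else 0

/-- The last standard basis vector of `ℝ^n`. -/
noncomputable def lastBasis (n : ℕ) : Fin n → ℝ :=
  fun i => if (i : ℕ) = n - 1 then 1 else 0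

/-- Bandwidth-parametrized feedback gain: `k_j(ω) = binom(n, j−1)·ω^{n+1−j}` for `j = 1,…,n`. -/
noncomputable def ctrlGain (n : ℕ) (ω : ℝ) : Fin n → ℝ :=
  fun j => (n.choose (j : ℕ)) * ω ^ (n - (j : ℕ))

/-- The closed-loop controller matrix `K(ω) = A_n − b_n·k(ω)`. -/
noncomputable def ctrlMat (n : ℕ) (ω : ℝ) : Matrix (Fin n) (Fin n) ℝ :=
  shiftMat n - Matrix.vecMulVec (lastBasis n) (ctrlGain n ω)

open Polynomial

namespace Matrix

variable {R S : Type*} [CommRing R] [CommRing S]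

def companion {n : ℕ} (c : Fin n → R) : Matrix (Fin n) (Fin n) R :=
  of fun i j => (if (i : ℕ) + 1 = j then 1 else 0) - if (i : ℕ) + 1 = n then c j else 0

lemma companion_map {n : ℕ} (c : Fin n → R) (f : R →+* S) :
    (companion c).map f = companion (f ∘ c) := by
  ext i j
  simp only [companion, map_apply, of_apply, Function.comp_apply]
  split_ifs <;> simp

lemma scalar_sub_companion_apply_zero {n : ℕ} (c : Fin (n + 1) → R) (t : R) (i : Fin (n + 1)) :
    (scalar (Fin (n + 1)) t - companion c) i 0
      = (if i = 0 then t else 0) + if i = Fin.last n then c 0 else 0 := by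
  simp only [Matrix.sub_apply, scalar_apply, diagonal_apply, companion, of_apply, Fin.val_zero,
    Nat.add_one_ne_zero, if_false, Fin.ext_iff, Fin.val_last, Nat.add_right_cancel_iff]
  ring

lemma scalar_sub_companion_submatrix_succ {n : ℕ} (c : Fin (n + 1) → R) (t : R) :
    (scalar (Fin (n + 1)) t - companion c).submatrix Fin.succ Fin.succ
      = scalar (Fin n) t - companion (Fin.tail c) := by
  ext i j
  simp [companion, Fin.tail, diagonal_apply]

lemma det_scalar_sub_companion_submatrix_castSucc_succ {n : ℕ} (c : Fin (n + 1) → R) (t : R) :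
    det ((scalar (Fin (n + 1)) t - companion c).submatrix Fin.castSucc Fin.succ) = (-1) ^ n := by
  have hlt (i : Fin n) : (i : ℕ) ≠ n := i.isLt.ne
  rw [det_of_isLowerTriangular]
  · simp [companion, Fin.ext_iff, hlt]
  · intro i j (hij : i < j)
    have h₁ : (i : ℕ) ≠ j + 1 := by omega
    have h₂ : (i : ℕ) ≠ j := by omega
    simp [companion, Fin.ext_iff, h₁, h₂, hlt]

theorem det_scalar_sub_companion {n : ℕ} (c : Fin n → R) (t : R) :
    det (scalar (Fin n) t - companion c) = t ^ n + ∑ j, c j * t ^ (j : ℕ) := by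
  induction n with
  | zero => simp
  | succ n ih =>
    have hexpand : det (scalar (Fin (n + 1)) t - companion c)
        = t * det (scalar (Fin n) t - companion (Fin.tail c)) + (-1) ^ n * c 0 * (-1) ^ n := by
      rw [det_succ_column_zero]
      simp only [scalar_sub_companion_apply_zero, mul_add, add_mul, Finset.sum_add_distrib,
        mul_ite, ite_mul, mul_zero, zero_mul, Finset.sum_ite_eq', Finset.mem_univ, if_true,
        Fin.succAbove_zero, Fin.succAbove_last, scalar_sub_companion_submatrix_succ,
        det_scalar_sub_companion_submatrix_castSucc_succ, Fin.val_zero, Fin.val_last, pow_zero,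
        one_mul]
    have hsign : (-1 : R) ^ n * (-1) ^ n = 1 := by rw [← pow_add, Even.neg_one_pow ⟨n, rfl⟩]
    have hsum : t * ∑ j : Fin n, c j.succ * t ^ (j : ℕ)
        = ∑ j : Fin n, c j.succ * t ^ (j + 1 : ℕ) := by
      rw [Finset.mul_sum]
      exact Finset.sum_congr rfl fun j _ => by ring
    rw [hexpand, ih, Fin.sum_univ_succ]
    simp only [Fin.tail, Fin.val_zero, Fin.val_succ, pow_zero, mul_one]
    linear_combination c 0 * hsign + hsum

theorem charpoly_companion {n : ℕ} (c : Fin n → R) :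
    (companion c).charpoly = X ^ n + ∑ j, C (c j) * X ^ (j : ℕ) := by
  rw [charpoly, charmatrix, RingHom.mapMatrix_apply, companion_map, det_scalar_sub_companion]
  rfl

end Matrix

lemma ctrlMat_eq_companion (n : ℕ) (ω : ℝ) : ctrlMat n ω = companion (ctrlGain n ω) := by
  ext i j
  have hlast : (i : ℕ) = n - 1 ↔ (i : ℕ) + 1 = n := by omega
  simp only [ctrlMat, shiftMat, lastBasis, companion, Matrix.sub_apply, vecMulVec_apply,
    of_apply, hlast, ite_mul, one_mul, zero_mul]

lemma charpoly_ctrlMat (n : ℕ) (ω : ℝ) : (ctrlMat n ω).charpoly = (X + C ω) ^ n := by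
  rw [ctrlMat_eq_companion, charpoly_companion, add_pow, Finset.sum_range_succ,
    ← Fin.sum_univ_eq_sum_range, add_comm (X ^ n)]
  simp only [ctrlGain, map_mul, map_pow, map_natCast, Nat.choose_self, Nat.sub_self, pow_zero,
    Nat.cast_one, mul_one]
  rw [add_left_inj]
  exact Finset.sum_congr rfl fun j _ => by ring

/-- For every `ω ∈ ℝ` the spectrum over `ℂ` of the bandwidth-parametrized closed-loop
controller matrix `K(ω) = A_n − b_n·k(ω)` is exactly the singleton `{−ω}`. -/
theorem ctrl_spectrum (n : ℕ) (hn : 1 ≤ n) (ω : ℝ) :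
    spectrum ℂ ((ctrlMat n ω).map (algebraMap ℝ ℂ)) = {(-(ω : ℂ))} := by
  ext μ
  rw [Matrix.mem_spectrum_iff_isRoot_charpoly, charpoly_map, charpoly_ctrlMat,
    Set.mem_singleton_iff]
  simp [pow_eq_zero_iff (by omega : n ≠ 0), add_eq_zero_iff_eq_neg]
end

section
/- Let n ≥ 1, A_n the n×n upper shift matrix, b_n the last standard basis vector, k_j(ω) = binom(n, j−1)·ω^{n+1−j}, and K(ω) = A_n − b_n·k(ω). There exists a constant C > 0, depending only on n, such that for all ω ≥ 1 and all t ≥ 0, the operator norm of the matrix exponential satisfies ‖exp(t·K(ω))‖ ≤ C · ω^{n−1} · e^{−ωt/2}. -/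
/-!
Rescaling coordinates by `D = diag(1, ω, …, ω^{n-1})` gives `K(ω) = ω · D K(1) D⁻¹`, so
`exp(t K(ω)) = D exp(ωt K(1)) D⁻¹` with `‖D‖ ≤ ω^{n-1}` and `‖D⁻¹‖ ≤ 1`. The Pascal matrix
`P = (binom(i, j))` satisfies `P (K(1) + 1) = A_n P` (this is Pascal's rule), so `N = K(1) + 1` is
nilpotent and `exp(s K(1)) = e^{-s} ∑_{k<n} s^k N^k / k!`. Each `s^k / k!` is at most
`2^k e^{s/2}`, which leaves the decay `e^{-s/2}`.
-/

open Matrix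

open NormedSpace Finset

section TopologicalAlgebra

variable {𝕂 𝔸 : Type*} [Field 𝕂] [CharZero 𝕂] [Ring 𝔸] [Algebra 𝕂 𝔸] [TopologicalSpace 𝔸]
  [IsTopologicalRing 𝔸]

theorem NormedSpace.exp_eq_sum_range_of_pow_eq_zero {x : 𝔸} {m : ℕ} (hx : x ^ m = 0) :
    exp x = ∑ k ∈ range m, (k.factorial⁻¹ : 𝕂) • x ^ k := by
  rw [congrFun (exp_eq_tsum 𝕂) x]
  refine tsum_eq_sum fun k hk => ?_
  rw [pow_eq_zero_of_le (by simpa using hk) hx, smul_zero]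

end TopologicalAlgebra

theorem Real.pow_div_factorial_le_two_pow_mul_exp_half {s : ℝ} (hs : 0 ≤ s) (k : ℕ) :
    s ^ k / k.factorial ≤ 2 ^ k * Real.exp (s / 2) := by
  have h := Real.pow_div_factorial_le_exp (s / 2) (by positivity) k
  rw [div_pow, div_div, div_le_iff₀ (by positivity)] at h
  rw [div_le_iff₀ (by positivity)]
  linarith

section BanachAlgebra

variable {𝔸 : Type*} [NormedRing 𝔸] [NormedAlgebra ℝ 𝔸]

theorem NormedSpace.exp_smul_sub_one [CompleteSpace 𝔸] (s : ℝ) (x : 𝔸) :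
    exp (s • (x - 1)) = Real.exp (-s) • exp (s • x) := by
  have hsplit : s • (x - 1) = algebraMap ℝ 𝔸 (-s) + s • x := by
    rw [Algebra.algebraMap_eq_smul_one, smul_sub, neg_smul]
    abel
  let _ := NormedAlgebra.restrictScalars ℚ ℝ 𝔸
  rw [hsplit, exp_add_of_commute (Algebra.commutes _ _), ← algebraMap_exp_comm,
    ← Real.exp_eq_exp_ℝ, ← Algebra.smul_def]

theorem NormedSpace.norm_exp_smul_le_of_pow_eq_zero {N : 𝔸} {m : ℕ} (hN : N ^ m = 0) {s : ℝ}
    (hs : 0 ≤ s) : ‖exp (s • N)‖ ≤ (∑ k ∈ range m, 2 ^ k * ‖N ^ k‖) * Real.exp (s / 2) := by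
  have hsN : (s • N) ^ m = 0 := by rw [smul_pow, hN, smul_zero]
  rw [exp_eq_sum_range_of_pow_eq_zero (𝕂 := ℝ) hsN, sum_mul]
  refine (norm_sum_le _ _).trans (sum_le_sum fun k _ => ?_)
  rw [smul_pow, smul_smul, norm_smul, Real.norm_of_nonneg (by positivity : (0 : ℝ) ≤ _),
    inv_mul_eq_div, mul_right_comm (2 ^ k : ℝ)]
  exact mul_le_mul_of_nonneg_right (Real.pow_div_factorial_le_two_pow_mul_exp_half hs k)
    (norm_nonneg _)

theorem NormedSpace.norm_exp_smul_sub_one_le_of_pow_eq_zero [CompleteSpace 𝔸] {N : 𝔸} {m : ℕ}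
    (hN : N ^ m = 0) {s : ℝ} (hs : 0 ≤ s) :
    ‖exp (s • (N - 1))‖ ≤ (∑ k ∈ range m, 2 ^ k * ‖N ^ k‖) * Real.exp (-s / 2) := by
  rw [exp_smul_sub_one, norm_smul, Real.norm_of_nonneg (Real.exp_pos _).le]
  calc Real.exp (-s) * ‖exp (s • N)‖
      ≤ Real.exp (-s) * ((∑ k ∈ range m, 2 ^ k * ‖N ^ k‖) * Real.exp (s / 2)) :=
        mul_le_mul_of_nonneg_left (norm_exp_smul_le_of_pow_eq_zero hN hs) (Real.exp_pos _).le
    _ = (∑ k ∈ range m, 2 ^ k * ‖N ^ k‖) * Real.exp (-s / 2) := by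
        rw [mul_left_comm, ← Real.exp_add]
        ring_nf

end BanachAlgebra

namespace Matrix

variable {ι : Type*} [Fintype ι] [DecidableEq ι]

theorem toEuclideanCLM_exp (A : Matrix ι ι ℝ) :
    toEuclideanCLM (𝕜 := ℝ) (exp A) = exp (toEuclideanCLM (𝕜 := ℝ) A) := by
  open scoped Matrix.Norms.L2Operator in
  let _ := NormedAlgebra.restrictScalars ℚ ℝ (Matrix ι ι ℝ)
  exact map_exp (toEuclideanCLM (𝕜 := ℝ) (n := ι)) (LinearMap.continuous_of_finiteDimensional
    (toEuclideanCLM (𝕜 := ℝ) (n := ι)).toAlgEquiv.toLinearMap) A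

theorem norm_toEuclideanCLM_diagonal_le {v : ι → ℝ} {c : ℝ} (hc : 0 ≤ c)
    (hv : ∀ i, |v i| ≤ c) : ‖toEuclideanCLM (𝕜 := ℝ) (diagonal v)‖ ≤ c := by
  open scoped Matrix.Norms.L2Operator in
  rw [l2_opNorm_toEuclideanCLM, l2_opNorm_diagonal]
  exact (pi_norm_le_iff_of_nonneg hc).mpr hv

end Matrix

theorem Fin.sum_univ_ite_val_eq {M : Type*} [AddCommMonoid M] {n : ℕ} (a : ℕ) (f : Fin n → M) :
    ∑ l : Fin n, (if (l : ℕ) = a then f l else 0) = if h : a < n then f ⟨a, h⟩ else 0 := by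
  split_ifs with h
  · rw [sum_eq_single ⟨a, h⟩ (fun l _ hl => if_neg fun e => hl (Fin.ext e)) (by simp)]
    simp
  · exact sum_eq_zero fun l _ => if_neg fun (e : (l : ℕ) = a) => h (e ▸ l.isLt)

theorem shiftMat_pow_apply (n k : ℕ) (i j : Fin n) :
    (shiftMat n ^ k) i j = if (i : ℕ) + k = j then 1 else 0 := by
  induction k generalizing j with
  | zero => simp [one_apply, Fin.ext_iff]
  | succ k ih =>
    rw [pow_succ, mul_apply]
    simp only [ih]
    simp only [shiftMat, of_apply, ite_mul, one_mul, zero_mul, @eq_comm _ ((i : ℕ) + k)]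
    rw [Fin.sum_univ_ite_val_eq]
    have := j.isLt
    split_ifs <;> grind

theorem shiftMat_pow_self (n : ℕ) : shiftMat n ^ n = 0 := by
  ext i j
  rw [shiftMat_pow_apply, if_neg (by omega), Matrix.zero_apply]

noncomputable def pascalMat (n : ℕ) : Matrix (Fin n) (Fin n) ℝ :=
  of fun i j => ((i : ℕ).choose j : ℝ)

theorem det_pascalMat (n : ℕ) : (pascalMat n).det = 1 := by
  rw [det_of_isLowerTriangular _ fun i j hij => ?_]
  · simp [pascalMat]
  · simpa [pascalMat] using
      Nat.choose_eq_zero_of_lt (Fin.lt_def.mp (OrderDual.toDual_lt_toDual.mp hij))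

theorem pascalMat_mulVec_lastBasis (n : ℕ) : pascalMat n *ᵥ lastBasis n = lastBasis n := by
  ext i
  simp only [mulVec, dotProduct, pascalMat, lastBasis, of_apply, mul_ite, mul_one, mul_zero]
  rw [Fin.sum_univ_ite_val_eq]
  have := i.isLt
  split_ifs with h1 h2
  · simp [h2]
  · simpa using Nat.choose_eq_zero_of_lt (by omega)
  · omega
  · rfl

theorem pascalMat_mul_shiftMat_add_one (n : ℕ) :
    pascalMat n * (shiftMat n + 1) =
      shiftMat n * pascalMat n + vecMulVec (lastBasis n) (ctrlGain n 1) := by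
  ext i ⟨j, hj⟩
  simp only [mul_apply, Matrix.add_apply, mul_add, sum_add_distrib, pascalMat, shiftMat, of_apply,
    one_apply, vecMulVec_apply, lastBasis, ctrlGain, one_pow, mul_one, mul_ite, ite_mul, mul_zero,
    zero_mul, one_mul, sum_ite_eq', mem_univ, if_true, @eq_comm _ ((i : ℕ) + 1)]
  rw [Fin.sum_univ_ite_val_eq]
  calc _ = (((i : ℕ) + 1).choose j : ℝ) := by
        rcases j with _ | j
        · simp
        · simp only [Nat.add_right_cancel_iff]
          rw [Fin.sum_univ_ite_val_eq, dif_pos (by omega)]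
          push_cast [Nat.choose_succ_succ']
          ring
    _ = _ := by
        by_cases hi : (i : ℕ) + 1 < n
        · rw [dif_pos hi, if_neg (by omega), add_zero]
        · rw [dif_neg hi, if_pos (by omega), zero_add]
          congr 2
          omega

theorem pascalMat_mul_ctrlMat_one_add_one (n : ℕ) :
    pascalMat n * (ctrlMat n 1 + 1) = shiftMat n * pascalMat n := by
  have h := pascalMat_mul_shiftMat_add_one n
  rw [ctrlMat, sub_add_eq_add_sub, Matrix.mul_sub, h, mul_vecMulVec, pascalMat_mulVec_lastBasis,
    add_sub_cancel_right]

theorem ctrlMat_one_add_one_pow_self (n : ℕ) : (ctrlMat n 1 + 1) ^ n = 0 := by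
  have hP : IsUnit (pascalMat n) := by
    rw [isUnit_iff_isUnit_det, det_pascalMat]
    exact isUnit_one
  have h := (SemiconjBy.pow_right (pascalMat_mul_ctrlMat_one_add_one n) n).eq
  rwa [shiftMat_pow_self, zero_mul, hP.mul_right_eq_zero] at h

theorem ctrlMat_mul_diagonal_pow (n : ℕ) (ω : ℝ) :
    ctrlMat n ω * diagonal (fun i : Fin n => ω ^ (i : ℕ)) =
      ω • (diagonal (fun i : Fin n => ω ^ (i : ℕ)) * ctrlMat n 1) := by
  ext i j
  simp only [mul_diagonal, diagonal_mul, Matrix.smul_apply, smul_eq_mul, ctrlMat, shiftMat,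
    lastBasis, ctrlGain, Matrix.sub_apply, of_apply, vecMulVec_apply, one_pow, mul_one]
  have := j.isLt
  split_ifs with h1 h2 h2
  · omega
  · rw [← h1, pow_succ]; ring
  · have h : ω ^ (n - (j : ℕ)) * ω ^ (j : ℕ) = ω * ω ^ (n - 1) := by
      rw [← pow_add, ← pow_succ']
      congr 1
      omega
    rw [h2]
    linear_combination -(n.choose j : ℝ) * h
  · ring

theorem exp_smul_ctrlMat (n : ℕ) {ω : ℝ} (hω : ω ≠ 0) (t : ℝ) :
    exp (t • ctrlMat n ω) =
      diagonal (fun i : Fin n => ω ^ (i : ℕ)) * exp ((ω * t) • ctrlMat n 1) *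
        diagonal (fun i : Fin n => (ω ^ (i : ℕ))⁻¹) := by
  set D := diagonal (fun i : Fin n => ω ^ (i : ℕ))
  set D' := diagonal (fun i : Fin n => (ω ^ (i : ℕ))⁻¹)
  have hDD' : D * D' = 1 := by simp [D, D', diagonal_mul_diagonal, hω]
  have hD'D : D' * D = 1 := by simp [D, D', diagonal_mul_diagonal, hω]
  have hK : t • ctrlMat n ω = D * ((ω * t) • ctrlMat n 1) * D' := by
    rw [← Matrix.mul_one (ctrlMat n ω), ← hDD', ← Matrix.mul_assoc, ctrlMat_mul_diagonal_pow,
      Matrix.smul_mul, smul_smul, Matrix.mul_smul, Matrix.smul_mul, mul_comm]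
  rw [hK]
  exact Matrix.exp_units_conj ⟨D, D', hDD', hD'D⟩ _

theorem norm_toEuclideanCLM_diagonal_pow_le (n : ℕ) {ω : ℝ} (hω : 1 ≤ ω) :
    ‖toEuclideanCLM (𝕜 := ℝ) (diagonal fun i : Fin n => ω ^ (i : ℕ))‖ ≤ ω ^ (n - 1) :=
  norm_toEuclideanCLM_diagonal_le (by positivity) fun i => by
    rw [abs_of_pos (by positivity)]
    exact pow_le_pow_right₀ hω (by omega)

theorem norm_toEuclideanCLM_diagonal_inv_pow_le (n : ℕ) {ω : ℝ} (hω : 1 ≤ ω) :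
    ‖toEuclideanCLM (𝕜 := ℝ) (diagonal fun i : Fin n => (ω ^ (i : ℕ))⁻¹)‖ ≤ 1 :=
  norm_toEuclideanCLM_diagonal_le zero_le_one fun i => by
    rw [abs_of_pos (by positivity)]
    exact inv_le_one_of_one_le₀ (one_le_pow₀ hω)

theorem ctrl_exp_norm_bound_general (n : ℕ) :
    ∃ C : ℝ, 0 < C ∧ ∀ ω : ℝ, 1 ≤ ω → ∀ t : ℝ, 0 ≤ t →
      ‖Matrix.toEuclideanCLM (𝕜 := ℝ) (NormedSpace.exp (t • ctrlMat n ω))‖ ≤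
        C * ω ^ (n - 1) * Real.exp (-(ω * t) / 2) := by
  set N := toEuclideanCLM (𝕜 := ℝ) (ctrlMat n 1 + 1)
  have hN : N ^ n = 0 := by rw [← map_pow, ctrlMat_one_add_one_pow_self, map_zero]
  set C₀ := ∑ k ∈ range n, 2 ^ k * ‖N ^ k‖
  refine ⟨max C₀ 1, by positivity, fun ω hω t ht => ?_⟩
  have hω₀ : 0 < ω := by linarith
  have hexp : ‖toEuclideanCLM (𝕜 := ℝ) (exp ((ω * t) • ctrlMat n 1))‖ ≤
      C₀ * Real.exp (-(ω * t) / 2) := by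
    rw [toEuclideanCLM_exp, map_smul,
      show toEuclideanCLM (𝕜 := ℝ) (ctrlMat n 1) = N - 1 by simp [N]]
    exact norm_exp_smul_sub_one_le_of_pow_eq_zero hN (by positivity)
  rw [exp_smul_ctrlMat n hω₀.ne', map_mul, map_mul]
  refine norm_mul₃_le.trans ?_
  calc _ ≤ ω ^ (n - 1) * (C₀ * Real.exp (-(ω * t) / 2)) * 1 := by
        gcongr
        exacts [norm_toEuclideanCLM_diagonal_pow_le n hω,
          norm_toEuclideanCLM_diagonal_inv_pow_le n hω]
    _ ≤ max C₀ 1 * ω ^ (n - 1) * Real.exp (-(ω * t) / 2) := by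
        rw [mul_one, mul_left_comm, ← mul_assoc]
        gcongr
        exact le_max_left _ _

/-- There is a constant `C > 0` depending only on `n` such that for all `ω ≥ 1` and `t ≥ 0`
the (Euclidean) operator norm of the closed-loop semigroup satisfies
`‖exp(t·K(ω))‖ ≤ C·ω^{n−1}·e^{−ωt/2}`. -/
theorem ctrl_exp_norm_bound (n : ℕ) (hn : 1 ≤ n) :
    ∃ C : ℝ, 0 < C ∧ ∀ ω : ℝ, 1 ≤ ω → ∀ t : ℝ, 0 ≤ t →
      ‖Matrix.toEuclideanCLM (𝕜 := ℝ) (NormedSpace.exp (t • ctrlMat n ω))‖ ≤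
        C * ω ^ (n - 1) * Real.exp (-(ω * t) / 2) :=
  ctrl_exp_norm_bound_general n
end
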